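/- For d ≥ 3, m_d(n) ≥ dn/2 + O(1); precisely, every percolating set of size n^{d-1} in d-neighbour bootstrap percolation on [n]^d takes at least d⌊n/2⌋ − d time steps to percolate. -/

import Mathlib

/-- The grid `[n]^d = {1,...,n}^d`, embedded in `ℕ^d`. -/
def gridSet (n d : ℕ) : Set (Fin d → ℕ) := {v | ∀ i, 1 ≤ v i ∧ v i ≤ n}

/-- Adjacency: differ by 1 in exactly one coordinate. -/
def gridAdj {d : ℕ} (u v : Fin d → ℕ) : Prop :=
  ∃ j, (u j = v j + 1 ∨ v j = u j + 1) ∧ ∀ i, i ≠ j → u i = v i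

/-- One round of `r`-neighbour bootstrap percolation on `[n]^d`. -/
def bpStep (n d r : ℕ) (S : Set (Fin d → ℕ)) : Set (Fin d → ℕ) :=
  S ∪ {v ∈ gridSet n d | r ≤ {u ∈ S | gridAdj u v}.ncard}

/-- Infected set after `t` rounds, starting from `A`. -/
def infected (n d r : ℕ) (A : Set (Fin d → ℕ)) (t : ℕ) : Set (Fin d → ℕ) :=
  (bpStep n d r)^[t] A

/-- The closure of `A`: all eventually infected vertices. -/
def bpClosure (n d r : ℕ) (A : Set (Fin d → ℕ)) : Set (Fin d → ℕ) :=
  ⋃ t, infected n d r A t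

/-- `A` percolates if every grid vertex is eventually infected. -/
def percolates (n d r : ℕ) (A : Set (Fin d → ℕ)) : Prop :=
  gridSet n d ⊆ bpClosure n d r A

/-- Percolation time: least `t` with the whole grid infected. -/
noncomputable def percTime (n d r : ℕ) (A : Set (Fin d → ℕ)) : ℕ :=
  sInf {t | gridSet n d ⊆ infected n d r A t}

/-- `V_k`: grid vertices of coordinate sum `k`. -/
def hyperplane (n d k : ℕ) : Set (Fin d → ℕ) := {v ∈ gridSet n d | ∑ i, v i = k}

/-- The "cyclic combination" set `A = ⋃_{i=1}^d V_{in}`. -/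
def diagUnion (n d : ℕ) : Set (Fin d → ℕ) :=
  ⋃ i ∈ Finset.Icc 1 d, hyperplane n d (i * n)


/-!
The perimeter `∑_{v ∈ F} (2d - #{neighbours of v in F})` of the infected set never increases,
since every newly infected vertex has at least `d` infected neighbours. Initially it is at most
`2d |A| = 2d n^{d-1}`, which is the perimeter of the whole grid, so it is constant. Hence `A` is
independent, and a vertex infected at time `t + 1` has exactly `d` neighbours infected by time
`t` and none infected at time `t + 1`. A vertex that is not a corner has at least `d + 1`
neighbours in the grid, so one of them is infected strictly later. Walking along such
neighbours from the centre `(⌊n/2⌋, …, ⌊n/2⌋)` the infection time increases at every step while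
the distance to the nearest corner drops by at most one, so some vertex is infected no earlier
than that distance, `d (⌊n/2⌋ - 1)`.
-/

open Finset Function

instance {d : ℕ} (u v : Fin d → ℕ) : Decidable (gridAdj u v) := by
  unfold gridAdj; infer_instance

variable {n d : ℕ}

lemma gridAdj_comm {u v : Fin d → ℕ} : gridAdj u v ↔ gridAdj v u := by
  constructor <;> exact fun ⟨j, hj, h⟩ => ⟨j, hj.symm, fun i hi => (h i hi).symm⟩

def gridFinset (n d : ℕ) : Finset (Fin d → ℕ) := Fintype.piFinset fun _ => Icc 1 n

lemma mem_gridFinset {v : Fin d → ℕ} : v ∈ gridFinset n d ↔ ∀ i, 1 ≤ v i ∧ v i ≤ n := by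
  simp [gridFinset]

@[simp] lemma coe_gridFinset : (gridFinset n d : Set (Fin d → ℕ)) = gridSet n d := by
  ext v; simp [mem_gridFinset, gridSet]

lemma card_filter_gridFinset_apply_eq (j : Fin d) {c : ℕ} (h1 : 1 ≤ c) (h2 : c ≤ n) :
    #{v ∈ gridFinset n d | v j = c} = n ^ (d - 1) := by
  simpa [gridFinset] using
    Fintype.card_filter_piFinset_const_eq_of_mem (Icc 1 n) j (mem_Icc.2 ⟨h1, h2⟩)

def gridStep (v : Fin d → ℕ) (p : Fin d × Bool) : Fin d → ℕ :=
  update v p.1 (if p.2 then v p.1 + 1 else v p.1 - 1)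

lemma gridStep_injective {v : Fin d → ℕ} (hv : ∀ i, 1 ≤ v i) : Injective (gridStep v) := by
  rintro ⟨j, b⟩ ⟨j', b'⟩ h
  have hj := congrFun h j
  have := hv j
  by_cases hjj : j = j'
  · subst hjj
    simp only [gridStep, update_self] at hj
    cases b <;> cases b' <;> simp at hj ⊢
    all_goals omega
  · simp only [gridStep, update_self, update_of_ne hjj] at hj
    cases b <;> simp at hj
    omega

lemma gridAdj_iff_exists_gridStep {u v : Fin d → ℕ} (hv : ∀ i, 1 ≤ v i) :
    gridAdj u v ↔ ∃ p, gridStep v p = u := by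
  constructor
  · rintro ⟨j, hj, hother⟩
    have hupd : ∀ b, u j = (if b then v j + 1 else v j - 1) → gridStep v (j, b) = u := by
      intro b hb
      ext i
      by_cases hij : i = j
      · subst hij; simp [gridStep, hb]
      · simp [gridStep, update_of_ne hij, hother i hij]
    rcases hj with h | h
    · exact ⟨_, hupd true (by simp [h])⟩
    · exact ⟨_, hupd false (by simp; omega)⟩
  · rintro ⟨⟨j, b⟩, rfl⟩
    refine ⟨j, ?_, fun i hi => by simp [gridStep, update_of_ne hi]⟩
    have := hv j
    cases b
    · simp [gridStep]; omega
    · simp [gridStep]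

lemma gridStep_mem_gridFinset_iff {v : Fin d → ℕ} (hv : v ∈ gridFinset n d) (p : Fin d × Bool) :
    gridStep v p ∈ gridFinset n d ↔ v p.1 ≠ if p.2 then n else 1 := by
  obtain ⟨j, b⟩ := p
  rw [mem_gridFinset] at hv ⊢
  constructor
  · intro h
    have := h j
    have := hv j
    cases b <;> simp_all [gridStep] <;> omega
  · intro h i
    by_cases hij : i = j
    · subst hij
      have := hv i
      cases b <;> simp [gridStep] at h ⊢ <;> omega
    · simpa [gridStep, update_of_ne hij] using hv i

def nbrCount (F : Finset (Fin d → ℕ)) (v : Fin d → ℕ) : ℕ := #{u ∈ F | gridAdj u v}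

lemma nbrCount_eq_card_gridStep (F : Finset (Fin d → ℕ)) {v : Fin d → ℕ} (hv : ∀ i, 1 ≤ v i) :
    nbrCount F v = #{p | gridStep v p ∈ F} := by
  rw [nbrCount, ← card_map ⟨gridStep v, gridStep_injective hv⟩]
  congr 1
  ext u
  simp [gridAdj_iff_exists_gridStep hv]
  grind

lemma two_mul_sub_nbrCount_eq_card (F : Finset (Fin d → ℕ)) {v : Fin d → ℕ} (hv : ∀ i, 1 ≤ v i) :
    (2 * d - nbrCount F v : ℤ) = #{p | gridStep v p ∉ F} := by
  have := card_filter_add_card_filter_not (s := univ) (fun p => gridStep v p ∈ F)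
  simp only [card_univ, Fintype.card_prod, Fintype.card_fin, Fintype.card_bool] at this
  rw [nbrCount_eq_card_gridStep F hv]
  omega

lemma nbrCount_union {F W : Finset (Fin d → ℕ)} (h : Disjoint F W) (v : Fin d → ℕ) :
    nbrCount (F ∪ W) v = nbrCount F v + nbrCount W v := by
  rw [nbrCount, filter_union, card_union_of_disjoint (disjoint_filter_filter h)]
  rfl

lemma sum_nbrCount_comm (F W : Finset (Fin d → ℕ)) :
    ∑ v ∈ F, nbrCount W v = ∑ w ∈ W, nbrCount F w := by
  simp only [nbrCount, card_filter]
  rw [sum_comm]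
  simp only [gridAdj_comm]

def perimeter (F : Finset (Fin d → ℕ)) : ℤ := ∑ v ∈ F, (2 * d - nbrCount F v : ℤ)

lemma perimeter_union {F W : Finset (Fin d → ℕ)} (h : Disjoint F W) :
    perimeter (F ∪ W) =
      perimeter F - ∑ w ∈ W, (2 * (nbrCount F w - d : ℤ) + nbrCount W w) := by
  have hswap := congrArg (Nat.cast (R := ℤ)) (sum_nbrCount_comm F W)
  push_cast at hswap
  simp only [perimeter, sum_union h, nbrCount_union h, Nat.cast_add, sum_sub_distrib,
    sum_add_distrib, ← mul_sum, sum_const, nsmul_eq_mul] at hswap ⊢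
  linarith

lemma perimeter_gridFinset (hn : 1 ≤ n) : perimeter (gridFinset n d) = 2 * d * n ^ (d - 1) := by
  have hslice (p : Fin d × Bool) :
      #{v ∈ gridFinset n d | gridStep v p ∉ gridFinset n d} = n ^ (d - 1) := by
    rw [← card_filter_gridFinset_apply_eq p.1 (c := if p.2 then n else 1)
      (by split_ifs <;> omega) (by split_ifs <;> omega)]
    congr 1
    exact filter_congr fun v hv => by simp [gridStep_mem_gridFinset_iff hv]
  calc perimeter (gridFinset n d)
      = ∑ v ∈ gridFinset n d, (#{p | gridStep v p ∉ gridFinset n d} : ℤ) :=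
        sum_congr rfl fun v hv =>
          two_mul_sub_nbrCount_eq_card _ fun i => (mem_gridFinset.1 hv i).1
    _ = ∑ p : Fin d × Bool, (#{v ∈ gridFinset n d | gridStep v p ∉ gridFinset n d} : ℤ) := by
        simp only [card_filter]
        push_cast
        exact sum_comm
    _ = 2 * d * n ^ (d - 1) := by
        simp only [hslice, sum_const, card_univ, Fintype.card_prod, Fintype.card_fin,
          Fintype.card_bool]
        push_cast
        ring

def cornerDist (n : ℕ) (v : Fin d → ℕ) : ℕ := ∑ i, min (v i - 1) (n - v i)

lemma cornerDist_le_of_gridAdj {u v : Fin d → ℕ} (h : gridAdj u v) :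
    cornerDist n v ≤ cornerDist n u + 1 := by
  obtain ⟨j, hj, hother⟩ := h
  have hrest : ∑ i ∈ univ.erase j, min (v i - 1) (n - v i) =
      ∑ i ∈ univ.erase j, min (u i - 1) (n - u i) :=
    sum_congr rfl fun i hi => by rw [hother i (ne_of_mem_erase hi)]
  rw [cornerDist, cornerDist, ← add_sum_erase _ _ (mem_univ j),
    ← add_sum_erase _ _ (mem_univ j), hrest]
  omega

lemma lt_nbrCount_gridFinset {v : Fin d → ℕ} (hv : v ∈ gridFinset n d)
    (hcd : cornerDist n v ≠ 0) : d < nbrCount (gridFinset n d) v := by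
  obtain ⟨j, -, hj⟩ := exists_ne_zero_of_sum_ne_zero hcd
  have hv' := mem_gridFinset.1 hv
  have hj' := hv' j
  rw [nbrCount_eq_card_gridStep _ fun i => (hv' i).1, card_filter, Fintype.sum_prod_type]
  simp only [Fintype.sum_bool, gridStep_mem_gridFinset_iff hv, if_true, Bool.false_eq_true,
    if_false]
  calc d = ∑ _i : Fin d, 1 := by simp
    _ < _ := sum_lt_sum (fun i _ => by have := hv' i; split_ifs <;> omega)
        ⟨j, mem_univ j, by split_ifs <;> omega⟩

theorem Finset.add_le_sup_of_forall_exists_lt {α : Type*} {s : Finset α} {f g : α → ℕ}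
    (h : ∀ v ∈ s, g v ≠ 0 → ∃ u ∈ s, f v < f u ∧ g v ≤ g u + 1) {v : α} (hv : v ∈ s) :
    f v + g v ≤ s.sup f := by
  induction hk : s.sup f - f v using Nat.strong_induction_on generalizing v with
  | _ k ih =>
    by_cases hg : g v = 0
    · simpa [hg] using le_sup (f := f) hv
    obtain ⟨u, hu, hlt, hgu⟩ := h v hv hg
    have hfu := le_sup (f := f) hu
    have := ih (s.sup f - f u) (by omega) hu rfl
    omega

def bpStepFinset (n d r : ℕ) (F : Finset (Fin d → ℕ)) : Finset (Fin d → ℕ) :=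
  F ∪ {v ∈ gridFinset n d | r ≤ nbrCount F v}

def infectedFinset (n d r : ℕ) (A : Finset (Fin d → ℕ)) (t : ℕ) : Finset (Fin d → ℕ) :=
  (bpStepFinset n d r)^[t] A

noncomputable def infectionTime (n d r : ℕ) (A : Finset (Fin d → ℕ)) (v : Fin d → ℕ) : ℕ :=
  sInf {t | v ∈ infectedFinset n d r A t}

variable {r T : ℕ} {A : Finset (Fin d → ℕ)}

lemma coe_bpStepFinset (F : Finset (Fin d → ℕ)) :
    (bpStepFinset n d r F : Set (Fin d → ℕ)) = bpStep n d r F := by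
  have hcount (v : Fin d → ℕ) : {u | u ∈ F ∧ gridAdj u v}.ncard = nbrCount F v := by
    rw [nbrCount, ← Set.ncard_coe_finset, coe_filter]
  ext v
  simp [bpStepFinset, bpStep, ← coe_gridFinset, hcount]

lemma coe_infectedFinset (t : ℕ) :
    (infectedFinset n d r A t : Set (Fin d → ℕ)) = infected n d r A t := by
  induction t with
  | zero => rfl
  | succ t ih =>
    simp only [infectedFinset, infected, iterate_succ_apply'] at ih ⊢
    rw [coe_bpStepFinset, ih]

lemma infectedFinset_succ (t : ℕ) :
    infectedFinset n d r A (t + 1) = bpStepFinset n d r (infectedFinset n d r A t) :=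
  iterate_succ_apply' _ _ _

lemma infectedFinset_mono : Monotone (infectedFinset n d r A) :=
  monotone_nat_of_le_succ fun t => by
    rw [infectedFinset_succ]
    exact subset_union_left

lemma infectedFinset_subset_gridFinset (hA : A ⊆ gridFinset n d) (t : ℕ) :
    infectedFinset n d r A t ⊆ gridFinset n d := by
  induction t with
  | zero => exact hA
  | succ t ih =>
    rw [infectedFinset_succ]
    exact union_subset ih (filter_subset _ _)

lemma le_nbrCount_of_mem_sdiff {t : ℕ} {v : Fin d → ℕ}
    (hv : v ∈ infectedFinset n d r A (t + 1) \ infectedFinset n d r A t) :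
    r ≤ nbrCount (infectedFinset n d r A t) v := by
  rw [mem_sdiff, infectedFinset_succ, bpStepFinset, mem_union, mem_filter] at hv
  tauto

lemma infectionTime_le {v : Fin d → ℕ} {t : ℕ} (h : v ∈ infectedFinset n d r A t) :
    infectionTime n d r A v ≤ t :=
  Nat.sInf_le h

lemma mem_infectedFinset_infectionTime {v : Fin d → ℕ} {t : ℕ}
    (h : v ∈ infectedFinset n d r A t) :
    v ∈ infectedFinset n d r A (infectionTime n d r A v) :=
  Nat.sInf_mem (s := {t | v ∈ infectedFinset n d r A t}) ⟨t, h⟩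

lemma exists_gridFinset_subset_infectedFinset (h : percolates n d r A) :
    ∃ T, gridFinset n d ⊆ infectedFinset n d r A T := by
  refine ⟨(gridFinset n d).sup (infectionTime n d r A), fun v hv => ?_⟩
  obtain ⟨t, ht⟩ := Set.mem_iUnion.1 (h (by simpa [← coe_gridFinset] using hv))
  rw [← coe_infectedFinset, mem_coe] at ht
  exact infectedFinset_mono (le_sup hv) (mem_infectedFinset_infectionTime ht)

lemma sup_infectionTime_le_percTime (h : percolates n d r A) :
    (gridFinset n d).sup (infectionTime n d r A) ≤ percTime n d r A := by
  obtain ⟨T, hT⟩ := exists_gridFinset_subset_infectedFinset h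
  have hperc : gridSet n d ⊆ infected n d r A (percTime n d r A) :=
    Nat.sInf_mem (s := {t | gridSet n d ⊆ infected n d r A t})
      ⟨T, show gridSet n d ⊆ _ by rwa [← coe_gridFinset, ← coe_infectedFinset, coe_subset]⟩
  rw [← coe_gridFinset, ← coe_infectedFinset, coe_subset] at hperc
  exact Finset.sup_le fun v hv => infectionTime_le (hperc hv)

lemma perimeter_infectedFinset_succ (t : ℕ) :
    perimeter (infectedFinset n d r A (t + 1)) = perimeter (infectedFinset n d r A t) -
      ∑ w ∈ infectedFinset n d r A (t + 1) \ infectedFinset n d r A t,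
        (2 * (nbrCount (infectedFinset n d r A t) w - d : ℤ) +
          nbrCount (infectedFinset n d r A (t + 1) \ infectedFinset n d r A t) w) := by
  rw [← perimeter_union disjoint_sdiff,
    union_sdiff_of_subset (infectedFinset_mono (Nat.le_add_right t 1))]

lemma perimeter_decrement_nonneg {t : ℕ} {w : Fin d → ℕ}
    (hw : w ∈ infectedFinset n d d A (t + 1) \ infectedFinset n d d A t) :
    0 ≤ 2 * (nbrCount (infectedFinset n d d A t) w - d : ℤ) +
      nbrCount (infectedFinset n d d A (t + 1) \ infectedFinset n d d A t) w := by
  have := le_nbrCount_of_mem_sdiff hw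
  omega

lemma perimeter_infectedFinset_antitone :
    Antitone fun t => perimeter (infectedFinset n d d A t) :=
  antitone_nat_of_succ_le fun t => by
    rw [perimeter_infectedFinset_succ]
    exact sub_le_self _ (sum_nonneg fun w hw => perimeter_decrement_nonneg hw)

lemma perimeter_infectedFinset_eq (hn : 1 ≤ n) (hA : A ⊆ gridFinset n d)
    (hcard : #A = n ^ (d - 1)) (hT : gridFinset n d ⊆ infectedFinset n d d A T) (t : ℕ) :
    perimeter (infectedFinset n d d A t) = 2 * d * n ^ (d - 1) := by
  have hgrid : infectedFinset n d d A (max t T) = gridFinset n d :=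
    (infectedFinset_subset_gridFinset hA _).antisymm
      (hT.trans (infectedFinset_mono (le_max_right t T)))
  have hseed : perimeter A ≤ 2 * d * n ^ (d - 1) := by
    calc perimeter A ≤ ∑ _v ∈ A, (2 * d : ℤ) := sum_le_sum fun v _ => by simp
      _ = 2 * d * n ^ (d - 1) := by simp [hcard]; ring
  have hlow := perimeter_infectedFinset_antitone (n := n) (A := A) (le_max_left t T)
  have hup := perimeter_infectedFinset_antitone (n := n) (A := A) (Nat.zero_le t)
  dsimp only at hlow hup
  rw [hgrid, perimeter_gridFinset hn] at hlow
  exact le_antisymm (hup.trans hseed) hlow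

lemma nbrCount_seed_eq_zero (hn : 1 ≤ n) (hA : A ⊆ gridFinset n d)
    (hcard : #A = n ^ (d - 1)) (hT : gridFinset n d ⊆ infectedFinset n d d A T)
    {v : Fin d → ℕ} (hv : v ∈ A) : nbrCount A v = 0 := by
  have h := perimeter_infectedFinset_eq hn hA hcard hT 0
  simp only [infectedFinset, iterate_zero, id, perimeter, sum_sub_distrib, sum_const, hcard,
    nsmul_eq_mul] at h
  have hsum : ∑ v ∈ A, nbrCount A v = 0 := by
    push_cast at h
    exact_mod_cast (by linarith : ∑ v ∈ A, (nbrCount A v : ℤ) = 0)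
  exact sum_eq_zero_iff.1 hsum v hv

lemma nbrCount_infectedFinset_succ_eq (hn : 1 ≤ n) (hA : A ⊆ gridFinset n d)
    (hcard : #A = n ^ (d - 1)) (hT : gridFinset n d ⊆ infectedFinset n d d A T)
    {t : ℕ} {w : Fin d → ℕ}
    (hw : w ∈ infectedFinset n d d A (t + 1) \ infectedFinset n d d A t) :
    nbrCount (infectedFinset n d d A (t + 1)) w = d := by
  have h := perimeter_infectedFinset_succ (n := n) (A := A) (r := d) t
  rw [perimeter_infectedFinset_eq hn hA hcard hT, perimeter_infectedFinset_eq hn hA hcard hT]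
    at h
  have hloss := (sum_eq_zero_iff_of_nonneg fun w hw => perimeter_decrement_nonneg hw).1
    (by linarith) w hw
  have := le_nbrCount_of_mem_sdiff hw
  rw [← union_sdiff_of_subset (infectedFinset_mono (Nat.le_add_right t 1)),
    nbrCount_union disjoint_sdiff]
  omega

lemma nbrCount_at_infectionTime_le (hn : 1 ≤ n) (hA : A ⊆ gridFinset n d)
    (hcard : #A = n ^ (d - 1)) (hT : gridFinset n d ⊆ infectedFinset n d d A T)
    {v : Fin d → ℕ} (hv : v ∈ gridFinset n d) :
    nbrCount (infectedFinset n d d A (infectionTime n d d A v)) v ≤ d := by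
  have hmem := mem_infectedFinset_infectionTime (hT hv)
  rcases h : infectionTime n d d A v with _ | t
  · rw [h] at hmem
    simp [infectedFinset, nbrCount_seed_eq_zero hn hA hcard hT hmem]
  · refine (nbrCount_infectedFinset_succ_eq hn hA hcard hT
    (mem_sdiff.2 ⟨h ▸ hmem, fun ht => ?_⟩)).le
    have := infectionTime_le ht
    omega

lemma exists_infectionTime_lt_of_cornerDist_ne_zero (hn : 1 ≤ n) (hA : A ⊆ gridFinset n d)
    (hcard : #A = n ^ (d - 1)) (hT : gridFinset n d ⊆ infectedFinset n d d A T)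
    {v : Fin d → ℕ} (hv : v ∈ gridFinset n d) (hcd : cornerDist n v ≠ 0) :
    ∃ u ∈ gridFinset n d, infectionTime n d d A v < infectionTime n d d A u ∧
      cornerDist n v ≤ cornerDist n u + 1 := by
  obtain ⟨u, hu, hlate⟩ := exists_mem_notMem_of_card_lt_card
    ((nbrCount_at_infectionTime_le hn hA hcard hT hv).trans_lt (lt_nbrCount_gridFinset hv hcd))
  rw [mem_filter] at hu
  refine ⟨u, hu.1, ?_, cornerDist_le_of_gridAdj hu.2⟩
  by_contra! hle
  exact hlate (mem_filter.2
    ⟨infectedFinset_mono hle (mem_infectedFinset_infectionTime (hT hu.1)), hu.2⟩)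

theorem le_sup_infectionTime (hA : A ⊆ gridFinset n d) (hcard : #A = n ^ (d - 1))
    (hT : gridFinset n d ⊆ infectedFinset n d d A T) :
    d * (n / 2) - d ≤ (gridFinset n d).sup (infectionTime n d d A) := by
  obtain h | h := Nat.eq_zero_or_pos (n / 2)
  · simp [h]
  set center : Fin d → ℕ := fun _ => n / 2
  have hcenter : center ∈ gridFinset n d := mem_gridFinset.2 fun _ => ⟨h, Nat.div_le_self n 2⟩
  calc d * (n / 2) - d = cornerDist n center := by
        simp [cornerDist, center, Nat.mul_sub_one, min_eq_left (by omega : n / 2 - 1 ≤ n - n / 2)]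
    _ ≤ infectionTime n d d A center + cornerDist n center := le_add_self
    _ ≤ _ := add_le_sup_of_forall_exists_lt (fun v hv hcd =>
        exists_infectionTime_lt_of_cornerDist_ne_zero (by omega) hA hcard hT hv hcd) hcenter

theorem min_time_lower_bound_general (n d : ℕ)
    (A : Set (Fin d → ℕ)) (hA : A ⊆ gridSet n d) (hperc : percolates n d d A)
    (hcard : A.ncard = n ^ (d - 1)) :
    d * (n / 2) - d ≤ percTime n d d A := by
  obtain ⟨A, rfl⟩ := ((gridFinset n d).finite_toSet.subset (by simpa using hA)).exists_finset_coe
  obtain ⟨T, hT⟩ := exists_gridFinset_subset_infectedFinset hperc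
  rw [← coe_gridFinset, coe_subset] at hA
  rw [Set.ncard_coe_finset] at hcard
  exact (le_sup_infectionTime hA hcard hT).trans
    (sup_infectionTime_le_percTime hperc)

theorem min_time_lower_bound (n d : ℕ) (hn : 1 ≤ n) (hd : 3 ≤ d)
    (A : Set (Fin d → ℕ)) (hA : A ⊆ gridSet n d) (hperc : percolates n d d A)
    (hcard : A.ncard = n ^ (d - 1)) :
    d * (n / 2) - d ≤ percTime n d d A :=
  min_time_lower_bound_general n d A hA hperc hcard
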